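/- Applying Algorithm 1 to P1 = P_{K,r} (for r ∈ [K−1]) and P2 the 1×Q array (1,2,…,Q) viewed as a (Q,1,0,Q) PDA yields a (KQ, C(K,r), C(K−1,r−1), Q·C(K,r+1)) PDA. -/

import Mathlib

/-- PDA predicate: `none` is the star; (A1) each column has exactly `Z` stars;
integers lie in `[S]`; (A2) each integer of `[S]` appears; (A3) equal integers lie
in distinct rows and columns with stars at the crossing positions. -/
def IsPDA {ι κ : Type*} [Fintype ι] (Z S : ℕ) (P : ι → κ → Option ℕ) : Prop :=
  (∀ k : κ, (Finset.univ.filter (fun f : ι => P f k = none)).card = Z) ∧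
  (∀ f k s, P f k = some s → s ∈ Finset.Icc 1 S) ∧
  (∀ s ∈ Finset.Icc 1 S, ∃ f k, P f k = some s) ∧
  (∀ f₁ k₁ f₂ k₂ s, (f₁, k₁) ≠ (f₂, k₂) →
      P f₁ k₁ = some s → P f₂ k₂ = some s →
      f₁ ≠ f₂ ∧ k₁ ≠ k₂ ∧ P f₁ k₂ = none ∧ P f₂ k₁ = none)

/-- Algorithm 1: each integer `s` of `P1` is replaced by `P2 + (s−1)·S2` and each
star of `P1` by an all-star block. -/
def extendPDA {ι1 κ1 ι2 κ2 : Type*} (S2 : ℕ)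
    (P1 : ι1 → κ1 → Option ℕ) (P2 : ι2 → κ2 → Option ℕ) :
    ι1 × ι2 → κ1 × κ2 → Option ℕ :=
  fun f k =>
    match P1 f.1 k.1 with
    | none => none
    | some s => (P2 f.2 k.2).map (fun v => v + (s - 1) * S2)

/-- Algorithm 2: the array `P_{D,t}` with entry `(T,d)` a star if `d ∈ T` and the
rank `y (T ∪ {d})` otherwise. -/
def PDT (D t : ℕ) (y : {T' : Finset (Fin D) // T'.card = t + 1} → ℕ) :
    {T : Finset (Fin D) // T.card = t} → Fin D → Option ℕ :=
  fun T d =>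
    if hd : d ∈ T.1 then none
    else some (y ⟨insert d T.1, by
      rw [Finset.card_insert_of_notMem hd, T.2]⟩)

/-- The `1 × Q` array `(1, 2, …, Q)`, viewed as a `(Q,1,0,Q)` PDA. -/
def rowPDA (Q : ℕ) : Fin 1 → Fin Q → Option ℕ := fun _ q => some (q.1 + 1)

/-!
Column `d` of `P_{K,r}` has its stars in the rows `T ∋ d`, which gives `Z = C(K-1,r-1)`; equal
entries `y (T ∪ {d}) = y (T' ∪ {d'})` force `T ∪ {d} = T' ∪ {d'}`, hence `d ∈ T'` and `d' ∈ T`.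
Algorithm 1 turns any two PDAs into a PDA: an entry `v + (s - 1) S₂` with `v ∈ [S₂]` determines
`(s, v)`, so two equal entries either come from equal entries of `P₁`, whose star crossings become
all-star blocks, or lie in one block, where the star crossings of `P₂` apply. The row `(1, …, Q)`
has no stars, so `Z` is unchanged and `S` becomes `Q·C(K,r+1)`.
-/

open Finset

theorem eq_and_eq_of_add_sub_one_mul_eq {n v v' s s' : ℕ} (hv : v ∈ Icc 1 n) (hv' : v' ∈ Icc 1 n)
    (hs : 1 ≤ s) (hs' : 1 ≤ s') (h : v + (s - 1) * n = v' + (s' - 1) * n) : v = v' ∧ s = s' := by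
  rw [mem_Icc] at hv hv'
  have hn : 0 < n := by omega
  have key : v - 1 + (s - 1) * n = v' - 1 + (s' - 1) * n := by omega
  have hmod := congrArg (· % n) key
  have hdiv := congrArg (· / n) key
  simp only [Nat.add_mul_mod_self_right, Nat.add_mul_div_right _ _ hn,
    Nat.mod_eq_of_lt (by omega : v - 1 < n), Nat.mod_eq_of_lt (by omega : v' - 1 < n),
    Nat.div_eq_of_lt (by omega : v - 1 < n), Nat.div_eq_of_lt (by omega : v' - 1 < n)] at hmod hdiv
  omega

theorem add_sub_one_mul_le_mul {n v s S : ℕ} (hv : v ≤ n) (hs : 1 ≤ s) (hsS : s ≤ S) :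
    v + (s - 1) * n ≤ S * n :=
  calc v + (s - 1) * n ≤ (s - 1 + 1) * n := by rw [add_one_mul]; omega
    _ ≤ S * n := Nat.mul_le_mul_right _ (by omega)

section Extension

variable {ι1 κ1 ι2 κ2 : Type*} {S2 : ℕ} {P1 : ι1 → κ1 → Option ℕ} {P2 : ι2 → κ2 → Option ℕ}

theorem extendPDA_eq_none_iff {f : ι1 × ι2} {k : κ1 × κ2} :
    extendPDA S2 P1 P2 f k = none ↔ P1 f.1 k.1 = none ∨ P2 f.2 k.2 = none := by
  unfold extendPDA
  cases P1 f.1 k.1 <;> simp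

theorem extendPDA_eq_some_iff {f : ι1 × ι2} {k : κ1 × κ2} {s : ℕ} :
    extendPDA S2 P1 P2 f k = some s ↔
      ∃ s1 v, P1 f.1 k.1 = some s1 ∧ P2 f.2 k.2 = some v ∧ v + (s1 - 1) * S2 = s := by
  unfold extendPDA
  cases P1 f.1 k.1 <;> simp

theorem card_filter_extendPDA_eq_none [Fintype ι1] [Fintype ι2] (k : κ1 × κ2) :
    #{f | extendPDA S2 P1 P2 f k = none} =
      #{f1 | P1 f1 k.1 = none} * Fintype.card ι2 +
        #{f1 | P1 f1 k.1 ≠ none} * #{f2 | P2 f2 k.2 = none} := by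
  classical
  have hsplit : ({f | extendPDA S2 P1 P2 f k = none} : Finset (ι1 × ι2)) =
      ({f1 | P1 f1 k.1 = none} : Finset ι1) ×ˢ univ ∪
        ({f1 | P1 f1 k.1 ≠ none} : Finset ι1) ×ˢ ({f2 | P2 f2 k.2 = none} : Finset ι2) := by
    ext f
    simp only [extendPDA_eq_none_iff, mem_filter, mem_univ, true_and, mem_union, mem_product,
      and_true]
    tauto
  rw [hsplit, card_union_of_disjoint, card_product, card_product, card_univ]
  exact disjoint_left.2 fun f hf hf' => by simp_all

theorem IsPDA.extend [Fintype ι1] [Fintype ι2] {Z1 S1 Z2 : ℕ}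
    (h1 : IsPDA Z1 S1 P1) (h2 : IsPDA Z2 S2 P2) :
    IsPDA (Z1 * Fintype.card ι2 + (Fintype.card ι1 - Z1) * Z2) (S1 * S2)
      (extendPDA S2 P1 P2) := by
  obtain ⟨star1, range1, surj1, sep1⟩ := h1
  obtain ⟨star2, range2, surj2, sep2⟩ := h2
  refine ⟨fun k => ?_, fun f k s hs => ?_, fun s hs => ?_, ?_⟩
  · have hcompl := card_filter_add_card_filter_not (s := univ) (fun f1 => P1 f1 k.1 = none)
    rw [star1, card_univ] at hcompl
    rw [card_filter_extendPDA_eq_none, star1, star2]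
    congr 2
    simp only [ne_eq]
    omega
  · obtain ⟨s1, v, hs1, hv, rfl⟩ := extendPDA_eq_some_iff.1 hs
    have hs1 := mem_Icc.1 (range1 _ _ _ hs1)
    have hv := mem_Icc.1 (range2 _ _ _ hv)
    exact mem_Icc.2 ⟨by omega, add_sub_one_mul_le_mul hv.2 hs1.1 hs1.2⟩
  · rw [mem_Icc] at hs
    have hS2 : 0 < S2 := Nat.pos_of_mul_pos_left (by omega : 0 < S1 * S2)
    have hq : (s - 1) / S2 < S1 := (Nat.div_lt_iff_lt_mul hS2).2 (by omega)
    have hm : (s - 1) % S2 < S2 := Nat.mod_lt _ hS2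
    obtain ⟨f1, k1, hf1⟩ := surj1 ((s - 1) / S2 + 1) (mem_Icc.2 ⟨Nat.le_add_left _ _, hq⟩)
    obtain ⟨f2, k2, hf2⟩ := surj2 ((s - 1) % S2 + 1) (mem_Icc.2 ⟨Nat.le_add_left _ _, hm⟩)
    refine ⟨(f1, f2), (k1, k2), extendPDA_eq_some_iff.2 ⟨_, _, hf1, hf2, ?_⟩⟩
    have := Nat.mod_add_div' (s - 1) S2
    rw [Nat.add_sub_cancel]
    omega
  · rintro ⟨f1, f2⟩ ⟨k1, k2⟩ ⟨f1', f2'⟩ ⟨k1', k2'⟩ s hne h h'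
    obtain ⟨s1, v, hs1, hv, rfl⟩ := extendPDA_eq_some_iff.1 h
    obtain ⟨s1', v', hs1', hv', heq⟩ := extendPDA_eq_some_iff.1 h'
    obtain ⟨rfl, rfl⟩ := eq_and_eq_of_add_sub_one_mul_eq (range2 _ _ _ hv) (range2 _ _ _ hv')
      (mem_Icc.1 (range1 _ _ _ hs1)).1 (mem_Icc.1 (range1 _ _ _ hs1')).1 heq.symm
    by_cases hP1 : (f1, k1) = (f1', k1')
    · obtain ⟨rfl, rfl⟩ := Prod.mk.inj hP1
      obtain ⟨hf, hk, hn, hn'⟩ := sep2 f2 k2 f2' k2' v (by simpa using hne) hv hv'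
      exact ⟨by simpa using hf, by simpa using hk, extendPDA_eq_none_iff.2 (Or.inr hn),
        extendPDA_eq_none_iff.2 (Or.inr hn')⟩
    · obtain ⟨hf, hk, hn, hn'⟩ := sep1 f1 k1 f1' k1' s1 hP1 hs1 hs1'
      exact ⟨fun h => hf (congrArg Prod.fst h), fun h => hk (congrArg Prod.fst h),
        extendPDA_eq_none_iff.2 (Or.inl hn), extendPDA_eq_none_iff.2 (Or.inl hn')⟩

end Extension

theorem isPDA_rowPDA (Q : ℕ) : IsPDA 0 Q (rowPDA Q) := by
  refine ⟨fun q => by simp [rowPDA], fun _ q s hs => ?_, fun s hs => ?_, ?_⟩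
  · obtain rfl : q.1 + 1 = s := Option.some.inj hs
    exact mem_Icc.2 ⟨by omega, q.2⟩
  · rw [mem_Icc] at hs
    exact ⟨0, ⟨s - 1, by omega⟩, by simp [rowPDA]; omega⟩
  · intro f q f' q' s hne h h'
    have hq : q = q' := Fin.ext (by simpa [rowPDA] using h.trans h'.symm)
    exact absurd (by rw [Subsingleton.elim f f', hq] : (f, q) = (f', q')) hne

theorem Finset.ne_and_mem_of_insert_eq_insert {α : Type*} [DecidableEq α] {a b : α}
    {s t : Finset α} (ha : a ∉ s) (hb : b ∉ t) (h : insert a s = insert b t)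
    (hne : (s, a) ≠ (t, b)) : a ≠ b ∧ b ∈ s ∧ a ∈ t := by
  have hab : a ≠ b := by
    rintro rfl
    exact hne (by rw [← erase_insert ha, h, erase_insert hb])
  have hb_mem : b ∈ insert a s := h ▸ mem_insert_self b t
  have ha_mem : a ∈ insert b t := h ▸ mem_insert_self a s
  exact ⟨hab, (mem_insert.1 hb_mem).resolve_left hab.symm, (mem_insert.1 ha_mem).resolve_left hab⟩

theorem card_filter_mem_subtype_card_eq {α : Type*} [Fintype α] [DecidableEq α] {r : ℕ}
    (hr : 1 ≤ r) (a : α) :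
    #{T : {T : Finset α // T.card = r} | a ∈ T.1} = (Fintype.card α - 1).choose (r - 1) := by
  rw [← card_univ, ← card_erase_of_mem (mem_univ a), ← Finset.card_powersetCard]
  refine card_bij (fun T _ => T.1.erase a) (fun T hT => ?_) (fun T hT T' hT' h => ?_)
    (fun S hS => ?_)
  · rw [mem_filter] at hT
    exact mem_powersetCard.2 ⟨erase_subset_erase a (subset_univ _),
      by rw [card_erase_of_mem hT.2, T.2]⟩
  · rw [mem_filter] at hT hT'
    exact Subtype.ext (by rw [← insert_erase hT.2, ← insert_erase hT'.2, h])
  · obtain ⟨hSsub, hScard⟩ := mem_powersetCard.1 hS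
    have ha : a ∉ S := fun h => notMem_erase a _ (hSsub h)
    exact ⟨⟨insert a S, by rw [card_insert_of_notMem ha, hScard]; omega⟩,
      by simp, erase_insert ha⟩

section PDT

variable {K r : ℕ} {y : {T' : Finset (Fin K) // T'.card = r + 1} → ℕ}

theorem PDT_eq_none_iff {T : {T : Finset (Fin K) // T.card = r}} {d : Fin K} :
    PDT K r y T d = none ↔ d ∈ T.1 := by
  by_cases hd : d ∈ T.1 <;> simp [PDT, hd]

theorem PDT_eq_some_iff {T : {T : Finset (Fin K) // T.card = r}} {d : Fin K} {s : ℕ} :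
    PDT K r y T d = some s ↔ d ∉ T.1 ∧ ∃ A, A.1 = insert d T.1 ∧ y A = s := by
  by_cases hd : d ∈ T.1
  · simp [PDT, hd]
  · simp only [PDT, hd, dite_false, Option.some.injEq, not_false_eq_true, true_and]
    exact ⟨fun h => ⟨_, rfl, h⟩, by rintro ⟨A, hA, rfl⟩; exact congrArg y (Subtype.ext hA.symm)⟩

theorem isPDA_PDT (hr : 1 ≤ r) (hy_inj : Function.Injective y)
    (hy_range : Set.range y = Set.Icc 1 (K.choose (r + 1))) :
    IsPDA ((K - 1).choose (r - 1)) (K.choose (r + 1)) (PDT K r y) := by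
  refine ⟨fun d => ?_, fun T d s hs => ?_, fun s hs => ?_, ?_⟩
  · simp_rw [PDT_eq_none_iff]
    simpa using card_filter_mem_subtype_card_eq hr d
  · obtain ⟨-, A, -, rfl⟩ := PDT_eq_some_iff.1 hs
    exact mem_Icc.2 (Set.mem_Icc.1 (hy_range ▸ Set.mem_range_self A))
  · obtain ⟨A, rfl⟩ : s ∈ Set.range y := hy_range ▸ Set.mem_Icc.2 (mem_Icc.1 hs)
    obtain ⟨d, hd⟩ : A.1.Nonempty := card_pos.1 (by rw [A.2]; omega)
    exact ⟨⟨A.1.erase d, by rw [card_erase_of_mem hd, A.2]; omega⟩, d,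
      PDT_eq_some_iff.2 ⟨notMem_erase d _, A, (insert_erase hd).symm, rfl⟩⟩
  · intro T1 d1 T2 d2 s hne h1 h2
    obtain ⟨hd1, A1, hA1, rfl⟩ := PDT_eq_some_iff.1 h1
    obtain ⟨hd2, A2, hA2, hy⟩ := PDT_eq_some_iff.1 h2
    have hins : insert d1 T1.1 = insert d2 T2.1 := by rw [← hA1, ← hA2, hy_inj hy]
    obtain ⟨hd, hd2_mem, hd1_mem⟩ := Finset.ne_and_mem_of_insert_eq_insert hd1 hd2 hins
      fun h => hne (Prod.ext (Subtype.ext (Prod.ext_iff.1 h).1) (Prod.ext_iff.1 h).2)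
    exact ⟨fun h => hd1 (by rwa [h]), hd, PDT_eq_none_iff.2 hd2_mem, PDT_eq_none_iff.2 hd1_mem⟩

end PDT

theorem extend_PDT_row_isPDA_general (K Q r : ℕ)
    (hr : 1 ≤ r)
    (y : {T' : Finset (Fin K) // T'.card = r + 1} → ℕ)
    (hy_inj : Function.Injective y)
    (hy_range : Set.range y = Set.Icc 1 (K.choose (r + 1))) :
    IsPDA ((K - 1).choose (r - 1)) (Q * K.choose (r + 1))
      (extendPDA Q (PDT K r y) (rowPDA Q)) := by
  have h := (isPDA_PDT hr hy_inj hy_range).extend (isPDA_rowPDA Q)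
  rwa [Fintype.card_fin, mul_one, mul_zero, add_zero, mul_comm] at h

/-- applying Algorithm 1 to `P1 = P_{K,r}` (with `r ∈ [K−1]` and `y`
the lexicographic rank, a bijection onto `[C(K,r+1)]`) and `P2 = (1,…,Q)` yields a
`(KQ, C(K,r), C(K−1,r−1), Q·C(K,r+1))` PDA. -/
theorem extend_PDT_row_isPDA (K Q r : ℕ) (hQ : 1 ≤ Q)
    (hr : 1 ≤ r) (hrK : r ≤ K - 1)
    (y : {T' : Finset (Fin K) // T'.card = r + 1} → ℕ)
    (hy_inj : Function.Injective y)
    (hy_range : Set.range y = Set.Icc 1 (K.choose (r + 1))) :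
    IsPDA ((K - 1).choose (r - 1)) (Q * K.choose (r + 1))
      (extendPDA Q (PDT K r y) (rowPDA Q)) :=
  extend_PDT_row_isPDA_general K Q r hr y hy_inj hy_range
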